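/- Let E and F be linear subspaces of ℝ^d and set m := dim(E ∩ F). For every α ∈ (0,1) there exists a constant C > 0 (depending on E, F, d, α) such that for every real L ≥ 1, the Lebesgue measure of the set { x ∈ ℝ^d : ‖x‖ ≤ L, dist(x, E) ≤ L^α and dist(x, F) ≤ L^α } is at most C · L^{m + α(d−m)}. -/

import Mathlib

/-!
Points that are `L ^ α`-close to both `E` and `F` are `K L ^ α`-close to `G = E ⊓ F`: the map
`x ↦ (x mod E, x mod F)` has kernel `G`, so on the finite-dimensional quotient by `G` it is
anti-Lipschitz. It remains to bound the volume of `{‖x‖ ≤ a, dist(x, G) ≤ b}`. Splitting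
`H = G ⊕ G'`, the linear map acting as `a⁻¹` on `G` and as `b⁻¹` on `G'` sends this set into a
fixed ball and has determinant `a ^ (-dim G) * b ^ (-(dim H - dim G))`.
-/

open MeasureTheory Metric Module

theorem Submodule.Quotient.norm_mk_eq_infDist {R M : Type*} [Ring R] [SeminormedAddCommGroup M]
    [Module R M] (S : Submodule R M) (x : M) :
    ‖(Submodule.Quotient.mk x : M ⧸ S)‖ = infDist x S :=
  QuotientAddGroup.norm_mk (S := S.toAddSubgroup) x

section FiniteDimensional

variable {H V : Type*} [NormedAddCommGroup H] [NormedSpace ℝ H] [FiniteDimensional ℝ H]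
  [NormedAddCommGroup V] [NormedSpace ℝ V]

theorem LinearMap.exists_infDist_ker_le (f : H →ₗ[ℝ] V) :
    ∃ K > 0, ∀ x, infDist x (ker f : Set H) ≤ K * ‖f x‖ := by
  have : IsClosed (ker f : Set H) := (ker f).closed_of_finiteDimensional
  obtain ⟨K, hK0, hK⟩ := ((ker f).liftQ f le_rfl).exists_antilipschitzWith
    ((ker f).ker_liftQ_eq_bot f le_rfl le_rfl)
  refine ⟨K, hK0, fun x => ?_⟩
  simpa [Submodule.Quotient.norm_mk_eq_infDist] using hK.le_mul_dist ((ker f).mkQ x) 0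

theorem LinearMap.exists_norm_le_mul_infDist (f : H →ₗ[ℝ] V) (G : Submodule ℝ H)
    (hG : G ≤ ker f) : ∃ c ≥ 0, ∀ x, ‖f x‖ ≤ c * infDist x (G : Set H) := by
  have : IsClosed (G : Set H) := G.closed_of_finiteDimensional
  let g := LinearMap.toContinuousLinearMap (G.liftQ f hG)
  refine ⟨‖g‖, norm_nonneg g, fun x => ?_⟩
  simpa [g, Submodule.Quotient.norm_mk_eq_infDist] using g.le_opNorm (G.mkQ x)

theorem Submodule.exists_infDist_inf_le_mul_max (E F : Submodule ℝ H) :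
    ∃ K > 0, ∀ x, infDist x (E ⊓ F : Submodule ℝ H) ≤
      K * max (infDist x (E : Set H)) (infDist x (F : Set H)) := by
  have : IsClosed (E : Set H) := E.closed_of_finiteDimensional
  have : IsClosed (F : Set H) := F.closed_of_finiteDimensional
  obtain ⟨K, hK0, hK⟩ := (E.mkQ.prod F.mkQ).exists_infDist_ker_le
  refine ⟨K, hK0, fun x => ?_⟩
  simpa [LinearMap.ker_prod, Prod.norm_def, Submodule.Quotient.norm_mk_eq_infDist] using hK x

theorem Submodule.det_conj_prodMap_smul (G G' : Submodule ℝ H) (h : IsCompl G G') (s t : ℝ) :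
    LinearMap.det ((G.prodEquivOfIsCompl G' h).conj
        (LinearMap.prodMap (s • LinearMap.id) (t • LinearMap.id))) =
      s ^ finrank ℝ G * t ^ (finrank ℝ H - finrank ℝ G) := by
  rw [LinearEquiv.conj_apply, LinearMap.comp_assoc, LinearMap.det_conj, LinearMap.det_prodMap,
    LinearMap.det_smul, LinearMap.det_smul, LinearMap.det_id, LinearMap.det_id, mul_one, mul_one,
    ← Submodule.finrank_add_eq_of_isCompl h, Nat.add_sub_cancel_left]

theorem Submodule.exists_addHaar_tube_le [MeasurableSpace H] [BorelSpace H] (μ : Measure H)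
    [μ.IsAddHaarMeasure] (G : Submodule ℝ H) :
    ∃ C : ℝ, ∀ a b : ℝ, 0 < a → 0 < b →
      μ {x | ‖x‖ ≤ a ∧ infDist x G ≤ b} ≤
        ENNReal.ofReal (C * (a ^ finrank ℝ G * b ^ (finrank ℝ H - finrank ℝ G))) := by
  obtain ⟨G', hG⟩ := G.exists_isCompl
  set p := LinearMap.toContinuousLinearMap (G.projectionOnto G' hG)
  set q := G'.projectionOnto G hG.symm
  obtain ⟨c, hc0, hc⟩ := q.exists_norm_le_mul_infDist G (ker_projectionOnto hG.symm).ge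
  set R := ‖p‖ + c
  refine ⟨(μ (closedBall 0 R)).toReal, fun a b ha hb => ?_⟩
  set g := (G.prodEquivOfIsCompl G' hG).conj
    (LinearMap.prodMap (a⁻¹ • LinearMap.id) (b⁻¹ • LinearMap.id))
  have hdet := G.det_conj_prodMap_smul G' hG a⁻¹ b⁻¹
  have hsub : {x | ‖x‖ ≤ a ∧ infDist x G ≤ b} ⊆ g ⁻¹' closedBall 0 R := by
    rintro x ⟨hxa, hxb⟩
    have hgx : g x = a⁻¹ • (p x : H) + b⁻¹ • (q x : H) := by
      simp [g, p, q, LinearEquiv.conj_apply]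
    have hpx : a⁻¹ * ‖p x‖ ≤ ‖p‖ := by
      rw [inv_mul_le_iff₀ ha, mul_comm]
      exact (p.le_opNorm x).trans (by gcongr)
    have hqx : b⁻¹ * ‖q x‖ ≤ c := by
      rw [inv_mul_le_iff₀ hb, mul_comm]
      exact (hc x).trans (by gcongr)
    rw [Set.mem_preimage, mem_closedBall_zero_iff, hgx]
    refine (norm_add_le _ _).trans ?_
    rw [norm_smul, norm_smul, Real.norm_of_nonneg (by positivity),
      Real.norm_of_nonneg (by positivity)]
    exact add_le_add hpx hqx
  calc μ {x | ‖x‖ ≤ a ∧ infDist x G ≤ b} ≤ μ (g ⁻¹' closedBall 0 R) := measure_mono hsub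
    _ = ENNReal.ofReal |(LinearMap.det g)⁻¹| * μ (closedBall 0 R) :=
      Measure.addHaar_preimage_linearMap μ (by rw [hdet]; positivity) _
    _ = ENNReal.ofReal (a ^ finrank ℝ G * b ^ (finrank ℝ H - finrank ℝ G)) *
          μ (closedBall 0 R) := by
      rw [hdet, inv_pow, inv_pow, ← mul_inv, inv_inv, abs_of_pos (by positivity)]
    _ = _ := by
      rw [ENNReal.ofReal_mul ENNReal.toReal_nonneg,
        ENNReal.ofReal_toReal measure_closedBall_lt_top.ne, mul_comm]

end FiniteDimensional

theorem Real.pow_mul_rpow_pow_eq_rpow {L : ℝ} (hL : 0 < L) (α : ℝ) {m d : ℕ} (hmd : m ≤ d) :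
    L ^ m * (L ^ α) ^ (d - m) = L ^ ((m : ℝ) + α * ((d : ℝ) - m)) := by
  rw [← Real.rpow_natCast L m, ← Real.rpow_natCast (L ^ α) (d - m), ← Real.rpow_mul hL.le,
    ← Real.rpow_add hL, Nat.cast_sub hmd]

theorem stmt8_general (d : ℕ) (E F : Submodule ℝ (EuclideanSpace ℝ (Fin d))) (m : ℕ)
    (hm : Module.finrank ℝ (E ⊓ F : Submodule ℝ (EuclideanSpace ℝ (Fin d))) = m)
    (α : ℝ) :
    ∃ C > (0 : ℝ), ∀ L : ℝ, 1 ≤ L →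
      volume {x : EuclideanSpace ℝ (Fin d) |
          ‖x‖ ≤ L ∧ Metric.infDist x (E : Set (EuclideanSpace ℝ (Fin d))) ≤ L ^ α ∧
            Metric.infDist x (F : Set (EuclideanSpace ℝ (Fin d))) ≤ L ^ α}
        ≤ ENNReal.ofReal (C * L ^ ((m : ℝ) + α * ((d : ℝ) - m))) := by
  obtain ⟨K, hK0, hK⟩ := E.exists_infDist_inf_le_mul_max F
  obtain ⟨C, hC⟩ := (E ⊓ F).exists_addHaar_tube_le volume
  rw [hm, finrank_euclideanSpace_fin] at hC
  have hmd : m ≤ d := by simpa [hm] using (E ⊓ F).finrank_le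
  refine ⟨max C 1 * K ^ (d - m), by positivity, fun L hL => ?_⟩
  have hL0 : 0 < L := by linarith
  have hsub : {x : EuclideanSpace ℝ (Fin d) | ‖x‖ ≤ L ∧ infDist x (E : Set _) ≤ L ^ α ∧
      infDist x (F : Set _) ≤ L ^ α} ⊆
      {x | ‖x‖ ≤ L ∧ infDist x (E ⊓ F : Submodule ℝ _) ≤ K * L ^ α} := by
    rintro x ⟨hx, hxE, hxF⟩
    exact ⟨hx, (hK x).trans (by gcongr; exact max_le hxE hxF)⟩
  calc _ ≤ _ := measure_mono hsub
    _ ≤ ENNReal.ofReal (C * (L ^ m * (K * L ^ α) ^ (d - m))) := hC L _ hL0 (by positivity)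
    _ ≤ ENNReal.ofReal (max C 1 * (L ^ m * (K * L ^ α) ^ (d - m))) := by
      gcongr
      exact le_max_left C 1
    _ = _ := by
      rw [← Real.pow_mul_rpow_pow_eq_rpow hL0 α hmd]
      congr 1
      ring

theorem stmt8 (d : ℕ) (E F : Submodule ℝ (EuclideanSpace ℝ (Fin d))) (m : ℕ)
    (hm : Module.finrank ℝ (E ⊓ F : Submodule ℝ (EuclideanSpace ℝ (Fin d))) = m)
    (α : ℝ) (hα : α ∈ Set.Ioo (0 : ℝ) 1) :
    ∃ C > (0 : ℝ), ∀ L : ℝ, 1 ≤ L →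
      volume {x : EuclideanSpace ℝ (Fin d) |
          ‖x‖ ≤ L ∧ Metric.infDist x (E : Set (EuclideanSpace ℝ (Fin d))) ≤ L ^ α ∧
            Metric.infDist x (F : Set (EuclideanSpace ℝ (Fin d))) ≤ L ^ α}
        ≤ ENNReal.ofReal (C * L ^ ((m : ℝ) + α * ((d : ℝ) - m))) :=
  stmt8_general d E F m hm α
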